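/- For every Dyck path π of semilength n, area(π) + bounce(π) ≤ C(n,2), with equality attained by the path N^n E^n. -/

import Mathlib

/-- A Dyck path of semilength `n`, encoded as a list of steps
(`true` = north, `false` = east), staying weakly above the diagonal. -/
def IsDyck (n : ℕ) (w : List Bool) : Prop :=
  w.length = 2 * n ∧ w.count true = n ∧
    ∀ k, (w.take k).count false ≤ (w.take k).count true

/-- The area of a Dyck path: the number of whole unit cells between the
path and the diagonal (on each north step, the current number of east
steps is subtracted from the current number of north steps). -/
def area (w : List Bool) : ℕ :=
  (w.foldl
    (fun (p : ℕ × ℕ × ℕ) s =>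
      if s then (p.1 + (p.2.1 - p.2.2), p.2.1 + 1, p.2.2)
      else (p.1, p.2.1, p.2.2 + 1)) (0, 0, 0)).1

/-- `hgt w b` is the number of north steps of `w` preceding its `(b+1)`-st
east step, i.e. the height at which the bounce path heading north along
the line `x = b` meets an east step of `w`. -/
def hgt : List Bool → ℕ → ℕ
  | [], _ => 0
  | true :: w, b => hgt w b + 1
  | false :: _, 0 => 0
  | false :: w, b + 1 => hgt w b

/-- The `i`-th bounce point (a height on the diagonal) of a Dyck path. -/
def bpt (w : List Bool) (i : ℕ) : ℕ := (hgt w)^[i] 0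

/-- The bounce statistic of a Dyck path of semilength `n`:
`∑ (n - b_i)` over the successive bounce points `b_i`, `i ≥ 1`
(once the bounce path reaches `n` the terms vanish). -/
def bounce (n : ℕ) (w : List Bool) : ℕ :=
  ∑ i ∈ Finset.range n, (n - bpt w (i + 1))

/-- The Dyck path `N^{α₁}E^{α₁} ⋯ N^{α_ℓ}E^{α_ℓ}` of a composition `α`. -/
def pComp (α : List ℕ) : List Bool :=
  α.foldr (fun a acc => List.replicate a true ++ List.replicate a false ++ acc) []

/-- Integer-valued area from diagonal offset `d`. -/
def ZA : List Bool → ℤ → ℤ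
  | [], _ => 0
  | true :: w, d => d + ZA w (d + 1)
  | false :: w, d => ZA w (d - 1)

lemma hgt_le_count : ∀ (w : List Bool) (b : ℕ), hgt w b ≤ w.count true := by
  intro w
  induction w with
  | nil => intro b; simp [hgt]
  | cons s w ih =>
    intro b
    cases s with
    | true =>
      have := ih b
      simp [hgt, List.count_cons]
      omega
    | false =>
      cases b with
      | zero => simp [hgt]
      | succ b =>
        have := ih b
        simp [hgt, List.count_cons]
        omega

lemma hgt_of_count_false_le : ∀ (w : List Bool) (b : ℕ),
    w.count false ≤ b → hgt w b = w.count true := by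
  intro w
  induction w with
  | nil => intro b _; simp [hgt]
  | cons s w ih =>
    intro b hb
    cases s with
    | true =>
      have hb' : w.count false ≤ b := by simp [List.count_cons] at hb; omega
      show hgt w b + 1 = _
      rw [ih b hb']
      simp [List.count_cons]
    | false =>
      cases b with
      | zero => simp [List.count_cons] at hb
      | succ b =>
        have hb' : w.count false ≤ b := by simp [List.count_cons] at hb; omega
        show hgt w b = _
        rw [ih b hb']
        simp [List.count_cons]

lemma lt_hgt_add : ∀ (w : List Bool) (b m : ℕ),
    (∀ k, (w.take k).count false ≤ (w.take k).count true + m) →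
    b < w.count false → b + 1 ≤ hgt w b + m := by
  intro w
  induction w with
  | nil => intro b m _ hb; simp at hb
  | cons s w ih =>
    intro b m H hb
    cases s with
    | true =>
      have H' : ∀ k, (w.take k).count false ≤ (w.take k).count true + (m + 1) := by
        intro k
        have := H (k + 1)
        simp [List.count_cons] at this
        omega
      have hb' : b < w.count false := by simp [List.count_cons] at hb; omega
      have := ih b (m + 1) H' hb'
      simp only [hgt]
      omega
    | false =>
      have hm : 1 ≤ m := by
        have := H 1
        simp [List.count_cons] at this
        omega
      cases b with
      | zero => simp only [hgt]; omega
      | succ b =>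
        have H' : ∀ k, (w.take k).count false ≤ (w.take k).count true + (m - 1) := by
          intro k
          have := H (k + 1)
          simp [List.count_cons] at this
          omega
        have hb' : b < w.count false := by simp [List.count_cons] at hb; omega
        have := ih b (m - 1) H' hb'
        simp only [hgt]
        omega

lemma ZA_eq : ∀ (w : List Bool) (d : ℤ),
    ZA w d = (w.count true : ℤ) * d + ((w.count true).choose 2 : ℤ)
      - ∑ b ∈ Finset.range (w.count false), ((w.count true : ℤ) - hgt w b) := by
  intro w
  induction w with
  | nil => intro d; simp [ZA]
  | cons s w ih =>
    intro d
    cases s with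
    | true =>
      have hT : (true :: w).count true = w.count true + 1 := by simp [List.count_cons]
      have hF : (true :: w).count false = w.count false := by simp [List.count_cons]
      have hsum : ∑ b ∈ Finset.range (w.count false),
          (((w.count true : ℤ) + 1) - hgt (true :: w) b)
          = ∑ b ∈ Finset.range (w.count false), ((w.count true : ℤ) - hgt w b) := by
        apply Finset.sum_congr rfl
        intro b _
        have : hgt (true :: w) b = hgt w b + 1 := rfl
        rw [this]
        push_cast
        ring
      have hch : ((w.count true + 1).choose 2 : ℤ)
          = ((w.count true).choose 2 : ℤ) + (w.count true : ℤ) := by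
        have : (w.count true + 1).choose 2 = (w.count true).choose 1 + (w.count true).choose 2 :=
          Nat.choose_succ_succ _ _
        rw [this]
        push_cast [Nat.choose_one_right]
        ring
      show d + ZA w (d + 1) = _
      rw [ih (d + 1), hT, hF]
      push_cast
      rw [hsum, ]
      push_cast at hch
      rw [hch]
      ring
    | false =>
      have hT : (false :: w).count true = w.count true := by simp [List.count_cons]
      have hF : (false :: w).count false = w.count false + 1 := by simp [List.count_cons]
      show ZA w (d - 1) = _
      rw [ih (d - 1), hT, hF]
      rw [Finset.sum_range_succ']
      have h0 : hgt (false :: w) 0 = 0 := rfl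
      have hsum : ∑ b ∈ Finset.range (w.count false),
          ((w.count true : ℤ) - hgt (false :: w) (b + 1))
          = ∑ b ∈ Finset.range (w.count false), ((w.count true : ℤ) - hgt w b) := by
        apply Finset.sum_congr rfl
        intro b _
        rfl
      rw [hsum, h0]
      push_cast
      ring

lemma fold_eq_ZA : ∀ (w : List Bool) (s a b : ℕ),
    (∀ k, (w.take k).count false + b ≤ (w.take k).count true + a) →
    ((w.foldl (fun (p : ℕ × ℕ × ℕ) s =>
      if s then (p.1 + (p.2.1 - p.2.2), p.2.1 + 1, p.2.2)
      else (p.1, p.2.1, p.2.2 + 1)) (s, a, b)).1 : ℤ) = (s : ℤ) + ZA w ((a : ℤ) - b) := by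
  intro w
  induction w with
  | nil => intro s a b _; simp [ZA]
  | cons c w ih =>
    intro s a b H
    have hba : b ≤ a := by have := H 0; simpa using this
    cases c with
    | true =>
      have H' : ∀ k, (w.take k).count false + b ≤ (w.take k).count true + (a + 1) := by
        intro k
        have := H (k + 1)
        simp [List.count_cons] at this
        omega
      have hstep := ih (s + (a - b)) (a + 1) b H'
      simp only [List.foldl_cons, reduceIte]
      rw [hstep]
      show _ = (s : ℤ) + ((a : ℤ) - b + ZA w ((a : ℤ) - b + 1))
      rw [show ((a + 1 : ℕ) : ℤ) - (b : ℤ) = ((a : ℤ) - b) + 1 by push_cast; ring]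
      rw [Nat.cast_add, Nat.cast_sub hba]
      ring
    | false =>
      have H' : ∀ k, (w.take k).count false + (b + 1) ≤ (w.take k).count true + a := by
        intro k
        have := H (k + 1)
        simp [List.count_cons] at this
        omega
      have hstep := ih s a (b + 1) H'
      simp only [List.foldl_cons]
      rw [if_neg Bool.false_ne_true, hstep]
      show _ = (s : ℤ) + ZA w ((a : ℤ) - b - 1)
      rw [show ((b + 1 : ℕ) : ℤ) = (b : ℤ) + 1 by push_cast; ring]
      ring_nf

lemma count_false_of_dyck {n : ℕ} {w : List Bool} (hw : IsDyck n w) :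
    w.count false = n := by
  obtain ⟨hlen, hct, -⟩ := hw
  have h : ∀ v : List Bool, v.count true + v.count false = v.length := by
    intro v
    induction v with
    | nil => simp
    | cons c v ih => cases c <;> simp [List.count_cons] <;> omega
  have := h w
  omega

lemma area_identity {n : ℕ} {w : List Bool} (hw : IsDyck n w) :
    area w + ∑ b ∈ Finset.range n, (n - hgt w b) = n.choose 2 := by
  have hcf := count_false_of_dyck hw
  obtain ⟨hlen, hct, hpre⟩ := hw
  have h1 := fold_eq_ZA w 0 0 0 (by intro k; simpa using hpre k)
  simp only [Nat.cast_zero, zero_add, sub_zero] at h1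
  have h2 := ZA_eq w 0
  rw [hct, hcf] at h2
  have hsum : ((∑ b ∈ Finset.range n, (n - hgt w b) : ℕ) : ℤ)
      = ∑ b ∈ Finset.range n, ((n : ℤ) - hgt w b) := by
    push_cast
    apply Finset.sum_congr rfl
    intro b _
    have : hgt w b ≤ n := hct ▸ hgt_le_count w b
    push_cast [Nat.cast_sub this]
    ring
  have : (area w : ℤ) + ((∑ b ∈ Finset.range n, (n - hgt w b) : ℕ) : ℤ)
      = (n.choose 2 : ℤ) := by
    unfold area
    rw [h1, hsum, h2]
    ring
  exact_mod_cast this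

lemma bpt_succ (w : List Bool) (i : ℕ) : bpt w (i + 1) = hgt w (bpt w i) := by
  unfold bpt
  rw [Function.iterate_succ_apply']

lemma bounce_le {n : ℕ} {w : List Bool} (hw : IsDyck n w) :
    bounce n w ≤ ∑ b ∈ Finset.range n, (n - hgt w b) := by
  have hcf := count_false_of_dyck hw
  obtain ⟨hlen, hct, hpre⟩ := hw
  have hle : ∀ i, bpt w i ≤ n := by
    intro i
    induction i with
    | zero => simp [bpt]
    | succ i ih => rw [bpt_succ]; exact hct ▸ hgt_le_count w _
  have hstep : ∀ i, bpt w i < n → bpt w i + 1 ≤ bpt w (i + 1) := by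
    intro i hi
    rw [bpt_succ]
    have := lt_hgt_add w (bpt w i) 0 (by intro k; simpa using hpre k) (by omega)
    omega
  have hmono : Monotone (bpt w) := by
    apply monotone_nat_of_le_succ
    intro i
    rcases lt_or_eq_of_le (hle i) with h | h
    · have := hstep i h; omega
    · rw [bpt_succ, h, hgt_of_count_false_le w n (le_of_eq hcf), hct]
  set f : ℕ → ℕ := fun b => n - hgt w b with hf
  have hbounce : bounce n w = ∑ i ∈ Finset.range n, f (bpt w i) := by
    unfold bounce
    apply Finset.sum_congr rfl
    intro i _
    rw [bpt_succ]
  rw [hbounce]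
  set S := (Finset.range n).filter (fun i => bpt w i < n) with hS
  have hzero : ∀ i ∈ Finset.range n, f (bpt w i) ≠ 0 → bpt w i < n := by
    intro i _ hne
    rcases lt_or_eq_of_le (hle i) with h | h
    · exact h
    · exfalso; apply hne
      simp only [hf, h, hgt_of_count_false_le w n (le_of_eq hcf), hct, Nat.sub_self]
  have h1 : ∑ i ∈ Finset.range n, f (bpt w i) = ∑ i ∈ S, f (bpt w i) :=
    (Finset.sum_filter_of_ne hzero).symm
  have hinj : Set.InjOn (bpt w) S := by
    intro i hi j hj hij
    simp only [hS, Finset.coe_filter, Finset.mem_range, Set.mem_setOf_eq] at hi hj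
    by_contra hne
    rcases Nat.lt_or_ge i j with h | h
    · have h2 : bpt w (i + 1) ≤ bpt w j := hmono h
      have := hstep i hi.2
      omega
    · have hj' : j < i := by omega
      have h2 : bpt w (j + 1) ≤ bpt w i := hmono hj'
      have := hstep j hj.2
      omega
  have h2 : ∑ i ∈ S, f (bpt w i) = ∑ b ∈ S.image (bpt w), f b :=
    (Finset.sum_image (fun i hi j hj h => hinj hi hj h)).symm
  have hsub : S.image (bpt w) ⊆ Finset.range n := by
    intro b hb
    simp only [Finset.mem_image, hS, Finset.mem_filter, Finset.mem_range] at hb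
    obtain ⟨i, ⟨-, hi⟩, rfl⟩ := hb
    exact Finset.mem_range.mpr hi
  rw [h1, h2]
  exact Finset.sum_le_sum_of_subset hsub

-- the extremal path
lemma pComp_single (n : ℕ) :
    pComp [n] = List.replicate n true ++ List.replicate n false := by
  simp [pComp]

lemma hgt_replicate_false : ∀ (m b : ℕ), hgt (List.replicate m false) b = 0 := by
  intro m
  induction m with
  | zero => intro b; simp [hgt]
  | succ m ih =>
    intro b
    cases b with
    | zero => rfl
    | succ b => simpa [List.replicate_succ, hgt] using ih b

lemma hgt_replicate_true_append (w : List Bool) :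
    ∀ (m b : ℕ), hgt (List.replicate m true ++ w) b = m + hgt w b := by
  intro m
  induction m with
  | zero => intro b; simp
  | succ m ih =>
    intro b
    simp only [List.replicate_succ, List.cons_append]
    show hgt (List.replicate m true ++ w) b + 1 = m + 1 + hgt w b
    rw [ih b]
    omega

lemma hgt_pComp (n b : ℕ) : hgt (pComp [n]) b = n := by
  rw [pComp_single, hgt_replicate_true_append, hgt_replicate_false]
  omega

lemma isDyck_pComp (n : ℕ) : IsDyck n (pComp [n]) := by
  rw [pComp_single]
  refine ⟨by simp; ring, by simp [List.count_replicate], ?_⟩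
  intro k
  rw [List.take_append]
  simp only [List.count_append, List.take_replicate, List.length_replicate,
    List.count_replicate]
  simp

lemma bpt_pComp (n i : ℕ) : bpt (pComp [n]) (i + 1) = n := by
  induction i with
  | zero => rw [bpt_succ]; exact hgt_pComp n _
  | succ i ih => rw [bpt_succ]; exact hgt_pComp n _

theorem stmt4 (n : ℕ) :
    (∀ w : List Bool, IsDyck n w → area w + bounce n w ≤ n.choose 2) ∧
    IsDyck n (pComp [n]) ∧
    area (pComp [n]) + bounce n (pComp [n]) = n.choose 2 := by
  refine ⟨?_, isDyck_pComp n, ?_⟩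
  · intro w hw
    have h1 := area_identity hw
    have h2 := bounce_le hw
    omega
  · have hd := isDyck_pComp n
    have h1 := area_identity hd
    have hb : bounce n (pComp [n]) = 0 := by
      unfold bounce
      apply Finset.sum_eq_zero
      intro i _
      rw [bpt_pComp]
      omega
    have hs : ∑ b ∈ Finset.range n, (n - hgt (pComp [n]) b) = 0 := by
      apply Finset.sum_eq_zero
      intro b _
      rw [hgt_pComp]
      omega
    rw [hs] at h1
    omega
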